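/- Let α, β ∈ (0,1) satisfy G(1−β)/G(β) = 2·G(1−α)/G(α) (the classical modular equation of degree 2, i.e. μ(s) = 2μ(r) with α = r², β = s²). Then β = ((1 − √(1−α))/(1 + √(1−α)))². -/

import Mathlib

/-- The hypergeometric function `₂F₁(1/2, 1/2; 1; x)`, defined for `x ∈ (0,1)` by its
power series `∑ ((1/2)ₙ (1/2)ₙ / (n!)²) xⁿ`, where `(a)ₙ` is the rising factorial. -/
noncomputable def G (x : ℝ) : ℝ :=
  ∑' n : ℕ, (Polynomial.eval (1/2 : ℝ) (ascPochhammer ℝ n) *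
      Polynomial.eval (1/2 : ℝ) (ascPochhammer ℝ n) / (n.factorial : ℝ)^2) * x^n

/-!
With `k = √(1 - α)`, expanding `(1 - x sin² θ)^(-1/2)` binomially and integrating termwise against
Wallis' integrals, then substituting `t = tan θ`, gives
`G (1 - k²) = (2/π) ∫₀^∞ dt / √((t² + 1)(t² + k²))`.
Gauss's substitution `u = (t - ab/t)/2` shows that `∫₀^∞ dt / √((t² + a²)(t² + b²))` is unchanged
when `(a, b)` is replaced by `((a + b)/2, √(ab))`; together with homogeneity this is Landen's
transformation, giving `G(β₀) = (1 + k)/2 · G(α)` and `G(1 - β₀) = (1 + k) · G(1 - α)` for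
`β₀ = ((1 - k)/(1 + k))²`. So `β₀` satisfies the same modular equation as `β`, and `β = β₀` because
`x ↦ G(1 - x)/G(x)` is strictly decreasing on `(0,1)`.
-/

open Real Set MeasureTheory

noncomputable def invSqrtCoeff (n : ℕ) : ℝ := (ascPochhammer ℝ n).eval (1/2 : ℝ) / n.factorial

lemma invSqrtCoeff_eq_prod (n : ℕ) :
    invSqrtCoeff n = ∏ i ∈ Finset.range n, (2 * (i : ℝ) + 1) / (2 * i + 2) := by
  induction n with
  | zero => simp [invSqrtCoeff]
  | succ n ih =>
    rw [Finset.prod_range_succ, ← ih, invSqrtCoeff, invSqrtCoeff, ascPochhammer_succ_right,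
      Polynomial.eval_mul, Nat.factorial_succ]
    simp only [Polynomial.eval_add, Polynomial.eval_X, Polynomial.eval_natCast]
    push_cast
    field_simp
    ring

lemma invSqrtCoeff_pos (n : ℕ) : 0 < invSqrtCoeff n := by
  rw [invSqrtCoeff_eq_prod]
  exact Finset.prod_pos fun i _ => by positivity

lemma invSqrtCoeff_le_one (n : ℕ) : invSqrtCoeff n ≤ 1 := by
  rw [invSqrtCoeff_eq_prod]
  exact Finset.prod_le_one (fun i _ => by positivity) fun i _ => by
    rw [div_le_one (by positivity)]; linarith

lemma choose_eq_invSqrtCoeff (n : ℕ) : Ring.choose ((1/2 : ℝ) + n - 1) n = invSqrtCoeff n := by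
  rw [Ring.choose_eq_smul, Polynomial.descPochhammer_smeval_eq_ascPochhammer,
    Polynomial.ascPochhammer_smeval_cast, Polynomial.ascPochhammer_smeval_eq_eval, invSqrtCoeff,
    smul_eq_mul, inv_mul_eq_div]
  ring_nf

lemma hasSum_invSqrtCoeff {u : ℝ} (hu : |u| < 1) :
    HasSum (fun n => invSqrtCoeff n * u ^ n) (1 / √(1 - u)) := by
  have := (one_div_one_sub_rpow_hasFPowerSeriesOnBall_zero (1/2)).hasSum (y := u) ?_
  · simp only [FormalMultilinearSeries.ofScalars_apply_eq, choose_eq_invSqrtCoeff, smul_eq_mul,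
      zero_add] at this
    simpa [Real.sqrt_eq_rpow, mul_comm] using this
  · simpa [enorm_eq_nnnorm, ← NNReal.coe_lt_coe] using hu

lemma G_eq_tsum (x : ℝ) : G x = ∑' n, invSqrtCoeff n ^ 2 * x ^ n := by
  simp only [G, invSqrtCoeff, mul_div_mul_comm, sq]

lemma summable_invSqrtCoeff_sq_mul_pow {x : ℝ} (hx₀ : 0 ≤ x) (hx₁ : x < 1) :
    Summable fun n => invSqrtCoeff n ^ 2 * x ^ n :=
  (summable_geometric_of_lt_one hx₀ hx₁).of_nonneg_of_le (fun n => by positivity) fun n =>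
    mul_le_of_le_one_left (by positivity)
      (pow_le_one₀ (invSqrtCoeff_pos n).le (invSqrtCoeff_le_one n))

lemma G_pos {x : ℝ} (hx₀ : 0 ≤ x) (hx₁ : x < 1) : 0 < G x := by
  rw [G_eq_tsum]
  refine (summable_invSqrtCoeff_sq_mul_pow hx₀ hx₁).tsum_pos (fun n => by positivity) 0 ?_
  simp [invSqrtCoeff]

lemma G_strictMonoOn : StrictMonoOn G (Ico 0 1) := by
  intro x hx y hy hxy
  rw [G_eq_tsum, G_eq_tsum]
  refine (summable_invSqrtCoeff_sq_mul_pow hy.1 hy.2).tsum_lt_tsum_of_nonneg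
    (fun n => by have := hx.1; positivity)
    (fun n => by gcongr; exact hx.1) (i := 1) ?_
  simp only [pow_one]
  exact mul_lt_mul_of_pos_left hxy (by have := invSqrtCoeff_pos 1; positivity)

lemma G_one_sub_div_G_strictAntiOn : StrictAntiOn (fun x => G (1 - x) / G x) (Ioo 0 1) := by
  intro x hx y hy hxy
  have hnum : G (1 - y) < G (1 - x) :=
    G_strictMonoOn ⟨by linarith [hy.2], by linarith [hy.1]⟩
      ⟨by linarith [hx.2], by linarith [hx.1]⟩ (by linarith)
  have hden : G x < G y := G_strictMonoOn ⟨hx.1.le, hx.2⟩ ⟨hy.1.le, hy.2⟩ hxy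
  exact div_lt_div₀ hnum hden.le (G_pos (by linarith [hx.2]) (by linarith [hx.1])).le
    (G_pos hx.1.le hx.2)

lemma integral_sin_pow_even_Ioo (n : ℕ) :
    ∫ θ in Ioo 0 (π / 2), sin θ ^ (2 * n) = π / 2 * invSqrtCoeff n := by
  have hint : ∀ a b : ℝ, IntervalIntegrable (fun θ => sin θ ^ (2 * n)) volume a b :=
    fun a b => (continuous_sin.pow _).intervalIntegrable a b
  have hsymm : ∫ θ in (π / 2)..π, sin θ ^ (2 * n) = ∫ θ in 0..(π / 2), sin θ ^ (2 * n) := by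
    simpa [show π - π / 2 = π / 2 by ring] using
      (intervalIntegral.integral_comp_sub_left (fun θ => sin θ ^ (2 * n)) π
        (a := 0) (b := π / 2)).symm
  have hwallis := intervalIntegral.integral_add_adjacent_intervals (hint 0 (π / 2)) (hint (π / 2) π)
  rw [hsymm, integral_sin_pow_even, ← invSqrtCoeff_eq_prod] at hwallis
  rw [← integral_Ioc_eq_integral_Ioo, ← intervalIntegral.integral_of_le (by positivity)]
  linarith

lemma G_eq_integral {x : ℝ} (hx₀ : 0 ≤ x) (hx₁ : x < 1) :
    G x = 2 / π * ∫ θ in Ioo 0 (π / 2), 1 / √(1 - x * sin θ ^ 2) := by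
  set F : ℕ → ℝ → ℝ := fun n θ => invSqrtCoeff n * x ^ n * sin θ ^ (2 * n)
  have hF_integral : ∀ n, ∫ θ in Ioo 0 (π / 2), F n θ = π / 2 * (invSqrtCoeff n ^ 2 * x ^ n) := by
    intro n
    rw [integral_const_mul, integral_sin_pow_even_Ioo]
    ring
  have hF_integrable : ∀ n, IntegrableOn (F n) (Ioo 0 (π / 2)) := fun n =>
    (continuous_const.mul (continuous_sin.pow _)).integrableOn_Icc.mono_set Ioo_subset_Icc_self
  have hF_norm : ∀ n θ, ‖F n θ‖ = F n θ := fun n θ =>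
    Real.norm_of_nonneg (by have := invSqrtCoeff_pos n; simp only [F, pow_mul]; positivity)
  have hsum : ∀ θ, ∑' n, F n θ = 1 / √(1 - x * sin θ ^ 2) := fun θ => by
    refine HasSum.tsum_eq ?_
    convert hasSum_invSqrtCoeff (u := x * sin θ ^ 2) ?_ using 2 with n
    · simp only [F, mul_pow, pow_mul]; ring
    · rw [abs_of_nonneg (by positivity)]
      nlinarith [sin_sq_le_one θ]
  rw [← funext hsum, ← integral_tsum_of_summable_integral_norm hF_integrable,
    tsum_congr hF_integral, tsum_mul_left, G_eq_tsum]
  · field_simp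
  · simpa only [hF_norm, hF_integral] using
      (summable_invSqrtCoeff_sq_mul_pow hx₀ hx₁).mul_left (π / 2)

noncomputable def agmIntegrand (a b t : ℝ) : ℝ := 1 / √((t ^ 2 + a ^ 2) * (t ^ 2 + b ^ 2))

/-- Gauss: `agmIntegral a b = π / (2 · agm a b)`. -/
noncomputable def agmIntegral (a b : ℝ) : ℝ := ∫ t in Ioi 0, agmIntegrand a b t

lemma image_mul_tan_Ioo {b : ℝ} (hb : 0 < b) : (fun θ => b * tan θ) '' Ioo 0 (π / 2) = Ioi 0 := by
  ext u
  constructor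
  · rintro ⟨θ, hθ, rfl⟩
    exact mul_pos hb (tan_pos_of_pos_of_lt_pi_div_two hθ.1 hθ.2)
  · intro hu
    refine ⟨arctan (u / b), ⟨arctan_pos.2 (div_pos hu hb), arctan_lt_pi_div_two _⟩, ?_⟩
    simp only [tan_arctan]
    field_simp

lemma integral_trig_eq_agmIntegral {a b : ℝ} (ha : 0 < a) (hb : 0 < b) :
    ∫ θ in Ioo 0 (π / 2), 1 / √(a ^ 2 * cos θ ^ 2 + b ^ 2 * sin θ ^ 2) = agmIntegral a b := by
  have hcos : ∀ θ ∈ Ioo 0 (π / 2), 0 < cos θ := fun θ hθ =>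
    cos_pos_of_mem_Ioo ⟨by linarith [hθ.1, pi_pos], hθ.2⟩
  have hderiv : ∀ θ ∈ Ioo 0 (π / 2),
      HasDerivWithinAt (fun θ => b * tan θ) (b / cos θ ^ 2) (Ioo 0 (π / 2)) θ := fun θ hθ => by
    simpa [div_eq_mul_inv] using
      ((hasDerivAt_tan (hcos θ hθ).ne').const_mul b).hasDerivWithinAt
  have hinj : InjOn (fun θ => b * tan θ) (Ioo 0 (π / 2)) := fun θ hθ φ hφ h =>
    injOn_tan ⟨by linarith [hθ.1, pi_pos], hθ.2⟩ ⟨by linarith [hφ.1, pi_pos], hφ.2⟩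
      (mul_left_cancel₀ hb.ne' h)
  rw [agmIntegral, ← image_mul_tan_Ioo hb,
    integral_image_eq_integral_abs_deriv_smul measurableSet_Ioo hderiv hinj]
  refine setIntegral_congr_fun measurableSet_Ioo fun θ hθ => ?_
  have hc := hcos θ hθ
  have hD : 0 < a ^ 2 * cos θ ^ 2 + b ^ 2 * sin θ ^ 2 := by
    have := pow_pos hc 2
    positivity
  have key : ((b * tan θ) ^ 2 + a ^ 2) * ((b * tan θ) ^ 2 + b ^ 2)
      = (b / cos θ ^ 2) ^ 2 * (a ^ 2 * cos θ ^ 2 + b ^ 2 * sin θ ^ 2) := by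
    rw [tan_eq_sin_div_cos]
    field_simp
    rw [sin_sq_add_cos_sq]
    ring
  simp only [smul_eq_mul, agmIntegrand]
  rw [key, sqrt_mul (sq_nonneg _), sqrt_sq (by positivity), abs_of_pos (by positivity)]
  field_simp

lemma integrable_agmIntegrand {a b : ℝ} (ha : 0 < a) (hb : 0 < b) :
    Integrable (agmIntegrand a b) := by
  set m := min 1 (a * b)
  have hm : 0 < m := lt_min one_pos (mul_pos ha hb)
  refine (integrable_inv_one_add_sq.const_mul m⁻¹).mono'
    (Measurable.aestronglyMeasurable (by unfold agmIntegrand; fun_prop)) (ae_of_all _ fun t => ?_)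
  have hlow : m * (1 + t ^ 2) ≤ √((t ^ 2 + a ^ 2) * (t ^ 2 + b ^ 2)) := by
    rw [le_sqrt (by positivity) (by positivity)]
    have h1 : m * (1 + t ^ 2) ≤ t ^ 2 + a * b := by
      nlinarith [min_le_left 1 (a * b), min_le_right 1 (a * b), sq_nonneg t]
    calc (m * (1 + t ^ 2)) ^ 2 ≤ (t ^ 2 + a * b) ^ 2 := by gcongr
      _ ≤ (t ^ 2 + a ^ 2) * (t ^ 2 + b ^ 2) := by nlinarith [sq_nonneg (t * (a - b))]
  rw [agmIntegrand, norm_of_nonneg (by positivity), one_div, ← mul_inv]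
  exact inv_anti₀ (by positivity) hlow

lemma agmIntegral_mul {c : ℝ} (hc : 0 < c) (a b : ℝ) :
    agmIntegral (c * a) (c * b) = agmIntegral a b / c := by
  have hscale : ∀ t, agmIntegrand (c * a) (c * b) (c * t) = (c ^ 2)⁻¹ * agmIntegrand a b t := by
    intro t
    rw [agmIntegrand, agmIntegrand, show ((c * t) ^ 2 + (c * a) ^ 2) * ((c * t) ^ 2 + (c * b) ^ 2)
      = (c ^ 2) ^ 2 * ((t ^ 2 + a ^ 2) * (t ^ 2 + b ^ 2)) by ring,
      sqrt_mul (by positivity), sqrt_sq (by positivity)]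
    field_simp
  have h := integral_comp_mul_left_Ioi (agmIntegrand (c * a) (c * b)) 0 hc
  simp only [hscale, integral_const_mul, mul_zero, smul_eq_mul] at h
  rw [agmIntegral, agmIntegral]
  field_simp at h ⊢
  linarith

lemma integral_eq_two_mul_integral_Ioi_of_even {g : ℝ → ℝ} (hg : Integrable g)
    (heven : ∀ u, g (-u) = g u) : ∫ u, g u = 2 * ∫ u in Ioi 0, g u := by
  have hneg : ∫ u in Iic 0, g u = ∫ u in Ioi 0, g u := by
    rw [← neg_zero, ← integral_comp_neg_Ioi]
    simp only [heven, neg_zero]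
  rw [← intervalIntegral.integral_Iic_add_Ioi hg.integrableOn hg.integrableOn, hneg]
  ring

lemma hasDerivAt_half_sub_div (c : ℝ) {t : ℝ} (ht : t ≠ 0) :
    HasDerivAt (fun t => (t - c / t) / 2) ((1 + c / t ^ 2) / 2) t :=
  (((hasDerivAt_id' t).sub ((hasDerivAt_const t c).div (hasDerivAt_id' t) ht)).div_const 2
    ).congr_deriv (by ring)

lemma injOn_half_sub_div {c : ℝ} (hc : 0 ≤ c) : InjOn (fun t => (t - c / t) / 2) (Ioi 0) := by
  intro s hs t ht hst
  have hs : 0 < s := hs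
  have ht : 0 < t := ht
  field_simp at hst
  have : (s - t) * (s * t + c) = 0 := by linear_combination hst
  linarith [(mul_eq_zero.1 this).resolve_right (by positivity)]

lemma image_half_sub_div_Ioi {c : ℝ} (hc : 0 < c) :
    (fun t => (t - c / t) / 2) '' Ioi 0 = univ := by
  refine eq_univ_of_forall fun u => ?_
  have hu : |u| < √(u ^ 2 + c) := by
    rw [← sqrt_sq_eq_abs]; exact sqrt_lt_sqrt (sq_nonneg u) (by linarith)
  have ht : 0 < u + √(u ^ 2 + c) := by linarith [neg_abs_le u]
  refine ⟨u + √(u ^ 2 + c), ht, ?_⟩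
  field_simp
  nlinarith [sq_sqrt (show 0 ≤ u ^ 2 + c by positivity)]

lemma agmIntegrand_half_sub_div {a b t : ℝ} (ha : 0 ≤ a) (hb : 0 ≤ b) (ht : 0 < t) :
    (1 + a * b / t ^ 2) / 2 * agmIntegrand ((a + b) / 2) √(a * b) ((t - a * b / t) / 2)
      = 2 * agmIntegrand a b t := by
  have hP : 0 < (t ^ 2 + a ^ 2) * (t ^ 2 + b ^ 2) := by positivity
  have key : (((t - a * b / t) / 2) ^ 2 + ((a + b) / 2) ^ 2) *
      (((t - a * b / t) / 2) ^ 2 + √(a * b) ^ 2)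
      = (√((t ^ 2 + a ^ 2) * (t ^ 2 + b ^ 2)) * ((t ^ 2 + a * b) / (4 * t ^ 2))) ^ 2 := by
    rw [mul_pow, sq_sqrt hP.le, sq_sqrt (by positivity)]
    field_simp
    ring
  rw [agmIntegrand, agmIntegrand, key, sqrt_sq (by positivity)]
  have := sqrt_pos.2 hP
  field_simp
  ring

lemma agmIntegral_eq_agmIntegral_mean_sqrt {a b : ℝ} (ha : 0 < a) (hb : 0 < b) :
    agmIntegral a b = agmIntegral ((a + b) / 2) √(a * b) := by
  have hab : 0 < a * b := mul_pos ha hb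
  have h := integral_image_eq_integral_abs_deriv_smul measurableSet_Ioi
    (fun t ht => (hasDerivAt_half_sub_div (a * b) (ne_of_gt ht)).hasDerivWithinAt)
    (injOn_half_sub_div hab.le) (agmIntegrand ((a + b) / 2) √(a * b))
  have hpoint : ∀ t ∈ Ioi (0 : ℝ), |(1 + a * b / t ^ 2) / 2| •
      agmIntegrand ((a + b) / 2) √(a * b) ((t - a * b / t) / 2) = 2 * agmIntegrand a b t :=
    fun t ht => by
      rw [smul_eq_mul, abs_of_pos (by positivity), agmIntegrand_half_sub_div ha.le hb.le ht]
  rw [image_half_sub_div_Ioi hab, Measure.restrict_univ,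
    integral_eq_two_mul_integral_Ioi_of_even (integrable_agmIntegrand (by positivity)
      (sqrt_pos.2 hab)) (fun u => by simp [agmIntegrand]),
    setIntegral_congr_fun measurableSet_Ioi hpoint, integral_const_mul] at h
  rw [agmIntegral, agmIntegral]
  linarith

lemma G_eq_agmIntegral {x : ℝ} (hx₀ : 0 ≤ x) (hx₁ : x < 1) :
    G x = 2 / π * agmIntegral 1 √(1 - x) := by
  rw [G_eq_integral hx₀ hx₁, ← integral_trig_eq_agmIntegral one_pos (sqrt_pos.2 (by linarith))]
  refine congrArg _ (setIntegral_congr_fun measurableSet_Ioo fun θ _ => ?_)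
  rw [sq_sqrt (by linarith)]
  congr 2
  linear_combination -sin_sq_add_cos_sq θ

lemma agmIntegral_one_landen {b : ℝ} (hb : 0 < b) :
    agmIntegral 1 b = 2 / (1 + b) * agmIntegral 1 (2 * √b / (1 + b)) := by
  have hscale := agmIntegral_mul (c := (1 + b) / 2) (by positivity) 1 (2 * √b / (1 + b))
  rw [show (1 + b) / 2 * 1 = (1 + b) / 2 by ring,
    show (1 + b) / 2 * (2 * √b / (1 + b)) = √b by field_simp] at hscale
  rw [agmIntegral_eq_agmIntegral_mean_sqrt one_pos hb, one_mul, hscale]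
  field_simp

lemma landen_mem_Ioo {k : ℝ} (hk₀ : 0 < k) (hk₁ : k < 1) : (1 - k) / (1 + k) ∈ Ioo 0 1 :=
  ⟨div_pos (by linarith) (by linarith), (div_lt_one (by linarith)).2 (by linarith)⟩

lemma G_landen {k : ℝ} (hk₀ : 0 < k) (hk₁ : k < 1) :
    G (((1 - k) / (1 + k)) ^ 2) = (1 + k) / 2 * G (1 - k ^ 2) := by
  obtain ⟨hr₀, hr₁⟩ := landen_mem_Ioo hk₀ hk₁
  have hsqrt : √(1 - ((1 - k) / (1 + k)) ^ 2) = 2 * √k / (1 + k) := by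
    rw [sqrt_eq_iff_mul_self_eq_of_pos (by positivity)]
    field_simp
    rw [sq_sqrt hk₀.le]
    ring
  rw [G_eq_agmIntegral (by positivity) (pow_lt_one₀ hr₀.le hr₁ two_ne_zero),
    G_eq_agmIntegral (by nlinarith) (by nlinarith), sub_sub_cancel, sqrt_sq hk₀.le,
    agmIntegral_one_landen hk₀, hsqrt]
  field_simp

lemma G_one_sub_landen {k : ℝ} (hk₀ : 0 < k) (hk₁ : k < 1) :
    G (1 - ((1 - k) / (1 + k)) ^ 2) = (1 + k) * G (k ^ 2) := by
  obtain ⟨hr₀, hr₁⟩ := landen_mem_Ioo hk₀ hk₁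
  set r := (1 - k) / (1 + k)
  have hmean : 2 / (1 + r) = 1 + k := by simp only [r]; field_simp; ring
  have hsqrt : 2 * √r / (1 + r) = √(1 - k ^ 2) := by
    rw [eq_comm, sqrt_eq_iff_mul_self_eq_of_pos (by positivity)]
    field_simp
    rw [sq_sqrt hr₀.le]
    simp only [r]
    field_simp
    ring
  rw [G_eq_agmIntegral (by nlinarith) (by nlinarith),
    G_eq_agmIntegral (by positivity) (by nlinarith), sub_sub_cancel, sqrt_sq hr₀.le,
    agmIntegral_one_landen hr₀, hmean, hsqrt]
  ring

lemma G_one_sub_div_G_landen {k : ℝ} (hk₀ : 0 < k) (hk₁ : k < 1) :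
    G (1 - ((1 - k) / (1 + k)) ^ 2) / G (((1 - k) / (1 + k)) ^ 2)
      = 2 * (G (k ^ 2) / G (1 - k ^ 2)) := by
  have hG := G_pos (x := 1 - k ^ 2) (by nlinarith) (by nlinarith)
  rw [G_landen hk₀ hk₁, G_one_sub_landen hk₀ hk₁]
  field_simp

theorem classical_modular_equation_deg2 (α β : ℝ) (hα : α ∈ Set.Ioo (0:ℝ) 1)
    (hβ : β ∈ Set.Ioo (0:ℝ) 1)
    (h : G (1 - β) / G β = 2 * (G (1 - α) / G α)) :
    β = ((1 - Real.sqrt (1 - α)) / (1 + Real.sqrt (1 - α)))^2 := by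
  set k := √(1 - α)
  have hk₀ : 0 < k := sqrt_pos.2 (by linarith [hα.2])
  have hk₁ : k < 1 := (sqrt_lt' one_pos).2 (by linarith [hα.1])
  have hα_eq : α = 1 - k ^ 2 := by rw [sq_sqrt (by linarith [hα.2])]; ring
  obtain ⟨hr₀, hr₁⟩ := landen_mem_Ioo hk₀ hk₁
  refine G_one_sub_div_G_strictAntiOn.injOn hβ
    ⟨by positivity, pow_lt_one₀ hr₀.le hr₁ two_ne_zero⟩ ?_
  simp only [h, G_one_sub_div_G_landen hk₀ hk₁, hα_eq, sub_sub_cancel]
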